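/- Let A_1, …, A_n ∈ ℝ^{D×D} and B_1, …, B_n ∈ ℝ^{D'×D'} be symmetric matrices. Then ‖∑_{i=1}^n B_i ⊗ A_i‖ ≤ (∑_{i=1}^n ‖B_i‖_F²)^{1/2} · ‖∑_{i=1}^n A_i²‖^{1/2}, where ⊗ denotes the Kronecker (tensor) product of matrices. -/

import Mathlib

open Matrix MeasureTheory ProbabilityTheory
open scoped NNReal Kronecker

/-- The spectral (operator) norm of a real square matrix. -/
noncomputable def specNorm {n : Type*} [Fintype n] [DecidableEq n] (A : Matrix n n ℝ) : ℝ :=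
  ‖Matrix.toEuclideanCLM (𝕜 := ℝ) A‖

/-- The Frobenius norm of a real square matrix: `√(Tr(Aᵀ A))`. -/
noncomputable def frobNorm {n : Type*} [Fintype n] (A : Matrix n n ℝ) : ℝ :=
  Real.sqrt ((Aᵀ * A).trace)

/-- The trace inner product `⟨A, B⟩ = Tr(Aᵀ B)` of real square matrices. -/
noncomputable def mInner {n : Type*} [Fintype n] (A B : Matrix n n ℝ) : ℝ :=
  (Aᵀ * B).trace

/-- The Euclidean (ℓ₂) norm of a vector in `ℝⁿ`. -/
noncomputable def l2norm {n : ℕ} (x : Fin n → ℝ) : ℝ := Real.sqrt (∑ i, (x i) ^ 2)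

/-- The sign cube `{-1, 1}ⁿ` as a finite set of vectors in `ℝⁿ`. -/
noncomputable def signs (n : ℕ) : Finset (Fin n → ℝ) :=
  Fintype.piFinset fun _ => ({-1, 1} : Finset ℝ)

/-- The distribution of a `d × D` random matrix with i.i.d. Gaussian entries of
mean `0` and variance `1/d`. -/
noncomputable def gaussMat (d D : ℕ) : Measure (Fin d → Fin D → ℝ) :=
  Measure.pi fun _ => Measure.pi fun _ => gaussianReal 0 (d : ℝ≥0)⁻¹

/-- The nuclear (trace) norm `Tr √(Mᵀ M)` of a real square matrix. -/
noncomputable def nucNorm {n : Type*} [Fintype n] [DecidableEq n] (M : Matrix n n ℝ) : ℝ :=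
  ((Matrix.posSemidef_conjTranspose_mul_self M).1.eigenvectorUnitary.1 *
    diagonal (Real.sqrt ∘ (Matrix.posSemidef_conjTranspose_mul_self M).1.eigenvalues) *
    (star (Matrix.posSemidef_conjTranspose_mul_self M).1.eigenvectorUnitary : Matrix n n ℝ)).trace

/-- The dual norm of a norm `N` on `ℝᵐ`: `‖y‖* = sup {⟨x, y⟩ : N x ≤ 1}`. -/
noncomputable def dualNorm {m : ℕ} (N : (Fin m → ℝ) → ℝ) (y : Fin m → ℝ) : ℝ :=
  sSup ((fun x => x ⬝ᵥ y) '' {x | N x ≤ 1})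

/-- The binary entropy function (base 2). -/
noncomputable def binH (p : ℝ) : ℝ := -p * Real.logb 2 p - (1 - p) * Real.logb 2 (1 - p)

/-! Identify `ℝ^{D'} ⊗ ℝ^D` with the `D × D'` matrices through `Matrix.vec`: the Euclidean norm
becomes the Frobenius norm and `∑ Bᵢ ⊗ Aᵢ` becomes `X ↦ Y = ∑ Aᵢ X Bᵢᵀ`. Cycling the trace,
`‖Y‖² = ∑ ⟨Y Bᵢ, Aᵢ X⟩ ≤ (∑ ‖Y Bᵢ‖²)^{1/2} (∑ ‖Aᵢ X‖²)^{1/2}` by Cauchy–Schwarz, where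
`‖Y Bᵢ‖ ≤ ‖Y‖ ‖Bᵢ‖` and `∑ ‖Aᵢ X‖² = ⟨X, (∑ Aᵢᵀ Aᵢ) X⟩ ≤ ‖∑ Aᵢᵀ Aᵢ‖ ‖X‖²`. Dividing by `‖Y‖`
gives the bound. -/

open WithLp

section SpecNorm

variable {m : Type*} [Fintype m] [DecidableEq m]

theorem specNorm_nonneg (M : Matrix m m ℝ) : 0 ≤ specNorm M :=
  norm_nonneg _

theorem norm_toLp_mulVec_le_specNorm (M : Matrix m m ℝ) (x : m → ℝ) :
    ‖toLp 2 (M *ᵥ x)‖ ≤ specNorm M * ‖toLp 2 x‖ :=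
  (toEuclideanCLM (𝕜 := ℝ) M).le_opNorm (toLp 2 x)

theorem specNorm_le_of_forall_norm_toLp_mulVec_le {M : Matrix m m ℝ} {c : ℝ} (hc : 0 ≤ c)
    (h : ∀ x, ‖toLp 2 (M *ᵥ x)‖ ≤ c * ‖toLp 2 x‖) : specNorm M ≤ c :=
  (toEuclideanCLM (𝕜 := ℝ) M).opNorm_le_bound hc fun z => h (ofLp z)

end SpecNorm

namespace Matrix

open scoped Norms.Frobenius

variable {ι l m n p : Type*} [Fintype ι] [Fintype l] [Fintype m] [Fintype n] [Fintype p]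

theorem frobenius_norm_eq_norm_toLp_vec (A : Matrix m n ℝ) : ‖A‖ = ‖toLp 2 (vec A)‖ := by
  refine (sq_eq_sq₀ (norm_nonneg _) (norm_nonneg _)).mp ?_
  change ‖toLp 2 fun i => toLp 2 (A i)‖ ^ 2 = _
  simp only [PiLp.norm_sq_eq_of_L2, Real.norm_eq_abs, sq_abs, Fintype.sum_prod_type, vec]
  exact Finset.sum_comm

theorem trace_transpose_mul_le_frobenius_norm_mul (A B : Matrix m n ℝ) :
    (Aᵀ * B).trace ≤ ‖A‖ * ‖B‖ := by
  rw [← vec_dotProduct_vec, frobenius_norm_eq_norm_toLp_vec, frobenius_norm_eq_norm_toLp_vec,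
    dotProduct_comm]
  exact real_inner_le_norm (toLp 2 (vec A)) (toLp 2 (vec B))

theorem frobenius_norm_sq_eq_trace (A : Matrix m n ℝ) : ‖A‖ ^ 2 = (Aᵀ * A).trace := by
  rw [← vec_dotProduct_vec, frobenius_norm_eq_norm_toLp_vec, ← real_inner_self_eq_norm_sq]
  rfl

theorem frobNorm_eq_frobenius_norm (A : Matrix m m ℝ) : frobNorm A = ‖A‖ := by
  rw [frobNorm, ← frobenius_norm_sq_eq_trace, Real.sqrt_sq (norm_nonneg A)]

theorem frobenius_norm_mul_le_specNorm [DecidableEq m] (S : Matrix m m ℝ) (X : Matrix m n ℝ) :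
    ‖S * X‖ ≤ specNorm S * ‖X‖ := by
  rw [← frobenius_norm_transpose X, ← frobenius_norm_transpose (S * X)]
  refine (pow_le_pow_iff_left₀ (norm_nonneg _)
    (mul_nonneg (specNorm_nonneg S) (norm_nonneg _)) two_ne_zero).mp ?_
  -- the rows of `(S * X)ᵀ` are the images under `S` of the columns of `X`
  change ‖toLp 2 fun j => toLp 2 (S *ᵥ Xᵀ j)‖ ^ 2 ≤
    (specNorm S * ‖toLp 2 fun j => toLp 2 (Xᵀ j)‖) ^ 2
  rw [mul_pow, PiLp.norm_sq_eq_of_L2, PiLp.norm_sq_eq_of_L2, Finset.mul_sum]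
  gcongr with j
  rw [← mul_pow]
  exact pow_le_pow_left₀ (norm_nonneg _) (norm_toLp_mulVec_le_specNorm S _) 2

theorem sum_frobenius_norm_mul_sq_le [DecidableEq m] (A : ι → Matrix l m ℝ) (X : Matrix m n ℝ) :
    ∑ i, ‖A i * X‖ ^ 2 ≤ specNorm (∑ i, (A i)ᵀ * A i) * ‖X‖ ^ 2 :=
  calc ∑ i, ‖A i * X‖ ^ 2 = (Xᵀ * ((∑ i, (A i)ᵀ * A i) * X)).trace := by
        simp only [frobenius_norm_sq_eq_trace]
        rw [Matrix.sum_mul, Matrix.mul_sum, trace_sum]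
        simp only [transpose_mul, Matrix.mul_assoc]
    _ ≤ ‖X‖ * ‖(∑ i, (A i)ᵀ * A i) * X‖ := trace_transpose_mul_le_frobenius_norm_mul _ _
    _ ≤ ‖X‖ * (specNorm (∑ i, (A i)ᵀ * A i) * ‖X‖) := by
        gcongr
        exact frobenius_norm_mul_le_specNorm _ _
    _ = specNorm (∑ i, (A i)ᵀ * A i) * ‖X‖ ^ 2 := by ring

theorem trace_transpose_mul_mul_transpose (Y : Matrix l p ℝ) (A : Matrix l m ℝ) (X : Matrix m n ℝ)
    (B : Matrix p n ℝ) : (Yᵀ * (A * X * Bᵀ)).trace = ((Y * B)ᵀ * (A * X)).trace := by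
  rw [transpose_mul, Matrix.mul_assoc Bᵀ, trace_mul_comm Bᵀ]
  simp only [Matrix.mul_assoc]

theorem frobenius_norm_sum_mul_mul_transpose_le [DecidableEq m] (A : ι → Matrix l m ℝ)
    (B : ι → Matrix p n ℝ) (X : Matrix m n ℝ) :
    ‖∑ i, A i * X * (B i)ᵀ‖ ≤
      √(∑ i, ‖B i‖ ^ 2) * √(specNorm (∑ i, (A i)ᵀ * A i)) * ‖X‖ := by
  set Y := ∑ i, A i * X * (B i)ᵀ
  set S := ∑ i, (A i)ᵀ * A i
  have key : ‖Y‖ ^ 2 ≤ ‖Y‖ * (√(∑ i, ‖B i‖ ^ 2) * √(specNorm S) * ‖X‖) :=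
    calc ‖Y‖ ^ 2 = ∑ i, ((Y * B i)ᵀ * (A i * X)).trace := by
          rw [frobenius_norm_sq_eq_trace]
          conv_lhs => rw [Matrix.mul_sum, trace_sum]
          simp only [trace_transpose_mul_mul_transpose]
      _ ≤ ∑ i, ‖Y * B i‖ * ‖A i * X‖ :=
          Finset.sum_le_sum fun i _ => trace_transpose_mul_le_frobenius_norm_mul _ _
      _ ≤ √(∑ i, ‖Y * B i‖ ^ 2) * √(∑ i, ‖A i * X‖ ^ 2) := Real.sum_mul_le_sqrt_mul_sqrt _ _ _
      _ ≤ √(‖Y‖ ^ 2 * ∑ i, ‖B i‖ ^ 2) * √(specNorm S * ‖X‖ ^ 2) := by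
          gcongr
          · rw [Finset.mul_sum]
            gcongr with i
            rw [← mul_pow]
            exact pow_le_pow_left₀ (norm_nonneg _) (frobenius_norm_mul _ _) 2
          · exact sum_frobenius_norm_mul_sq_le A X
      _ = ‖Y‖ * (√(∑ i, ‖B i‖ ^ 2) * √(specNorm S) * ‖X‖) := by
          rw [Real.sqrt_mul (sq_nonneg _), Real.sqrt_mul (specNorm_nonneg S),
            Real.sqrt_sq (norm_nonneg _), Real.sqrt_sq (norm_nonneg _)]
          ring
  have : 0 ≤ √(∑ i, ‖B i‖ ^ 2) * √(specNorm S) * ‖X‖ := by positivity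
  nlinarith [norm_nonneg Y]

end Matrix

theorem tensor_cauchy_schwarz_general (D D' n : ℕ)
    (A : Fin n → Matrix (Fin D) (Fin D) ℝ)
    (B : Fin n → Matrix (Fin D') (Fin D') ℝ)
    (hA : ∀ i, (A i).IsSymm) :
    specNorm (∑ i, B i ⊗ₖ A i) ≤
      Real.sqrt (∑ i, frobNorm (B i) ^ 2) * Real.sqrt (specNorm (∑ i, A i ^ 2)) := by
  have hS : ∑ i, A i ^ 2 = ∑ i, (A i)ᵀ * A i := by simp only [sq, (hA _).eq]
  refine specNorm_le_of_forall_norm_toLp_mulVec_le (by positivity) fun x => ?_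
  obtain ⟨X, rfl⟩ := vec_bijective.surjective x
  simp only [sum_mulVec, kronecker_mulVec_vec, ← vec_sum, ← frobenius_norm_eq_norm_toLp_vec,
    frobNorm_eq_frobenius_norm, hS]
  exact frobenius_norm_sum_mul_mul_transpose_le A B X

/-- Proposition `tensor-cauchy-schwarz` (Section 6).  For symmetric `A₁, …, Aₙ ∈ ℝ^{D×D}`
and `B₁, …, Bₙ ∈ ℝ^{D'×D'}`:
`‖∑ Bᵢ ⊗ Aᵢ‖ ≤ (∑ ‖Bᵢ‖_F²)^{1/2} ‖∑ Aᵢ²‖^{1/2}`. -/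
theorem tensor_cauchy_schwarz (D D' n : ℕ)
    (A : Fin n → Matrix (Fin D) (Fin D) ℝ)
    (B : Fin n → Matrix (Fin D') (Fin D') ℝ)
    (hA : ∀ i, (A i).IsSymm) (hB : ∀ i, (B i).IsSymm) :
    specNorm (∑ i, B i ⊗ₖ A i) ≤
      Real.sqrt (∑ i, frobNorm (B i) ^ 2) * Real.sqrt (specNorm (∑ i, A i ^ 2)) :=
  tensor_cauchy_schwarz_general D D' n A B hA
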